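/- arXiv:1408.3870 — 4 statements merged into one kernel-verified Lean document; each statement's English description precedes it below -/
import Mathlib

section
/- Any ℓ-fine partition of any rooted tree (T,r) admits an ordered skeleton, i.e. a sequence (X₀, X₁, …, X_m) such that X₀ is a hub containing r, every X_i is a hub or a shrub, the union of the X_i covers V(T), and for each i = 1,…,m the subgraph of T formed by X₀ ∪ X₁ ∪ … ∪ X_i is connected. -/
open Classical

/-- The tree order induced by the root `r`: `x ⪯ y` iff `x` lies on the (unique) path from
`r` to `y`, i.e. `dist r x + dist x y = dist r y`. -/
def TreeLE {V : Type} (T : SimpleGraph V) (r x y : V) : Prop :=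
  T.dist r x + T.dist x y = T.dist r y

/-- A (vertex set of a) subtree of `T`: a non-empty set inducing a connected subgraph. -/
def IsSubtree {V : Type} (T : SimpleGraph V) (S : Finset V) : Prop :=
  S.Nonempty ∧ (T.induce (S : Set V)).Connected

/-- An end subtree: its vertex set is the up-closure of some vertex in the tree order. -/
def IsEndSubtree {V : Type} (T : SimpleGraph V) (r : V) (S : Finset V) : Prop :=
  ∃ x : V, (S : Set V) = {v : V | TreeLE T r x v}

/-- `x` is the seed of the subtree `S`: the `⪯`-maximal vertex outside `S` preceding all of
`S`. -/
def IsSeed {V : Type} (T : SimpleGraph V) (r : V) (S : Finset V) (x : V) : Prop :=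
  x ∉ S ∧ (∀ v ∈ S, TreeLE T r x v) ∧
    ∀ y : V, y ∉ S → (∀ v ∈ S, TreeLE T r y v) → TreeLE T r y x

/-- An `ℓ`-fine partition `(W_A, W_B, S_A, S_B)` of a tree `T` of order `k` rooted at `r`. -/
structure IsFinePartition {V : Type} [Fintype V] [DecidableEq V] (T : SimpleGraph V) (r : V)
    (k ℓ : ℕ) (WA WB : Finset V) (SA SB : Finset (Finset V)) : Prop where
  /-- the members of `S_A ∪ S_B` are subtrees of `T` -/
  subtree : ∀ S ∈ SA ∪ SB, IsSubtree T S
  /-- (a) `W_A`, `W_B` and the vertex sets of the subtrees partition `V(T)`: -/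
  disjointWAB : Disjoint WA WB
  disjointSW : ∀ S ∈ SA ∪ SB, Disjoint S (WA ∪ WB)
  disjointSS : ∀ S₁ ∈ SA ∪ SB, ∀ S₂ ∈ SA ∪ SB, S₁ ≠ S₂ → Disjoint S₁ S₂
  cover : ∀ v : V, v ∈ WA ∨ v ∈ WB ∨ ∃ S ∈ SA ∪ SB, v ∈ S
  /-- (b) the root lies in `W_A ∪ W_B` -/
  rootMem : r ∈ WA ∪ WB
  /-- (c) `max {|W_A|, |W_B|} ≤ 336 k / ℓ` -/
  cardWA : (WA.card : ℝ) ≤ 336 * k / ℓ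
  cardWB : (WB.card : ℝ) ≤ 336 * k / ℓ
  /-- (d) distances between cut vertices are odd iff exactly one endpoint is in `W_A` -/
  parity : ∀ w₁ ∈ WA ∪ WB, ∀ w₂ ∈ WA ∪ WB,
    (Odd (T.dist w₁ w₂) ↔ (w₁ ∈ WA ∧ w₂ ∈ WB) ∨ (w₁ ∈ WB ∧ w₂ ∈ WA))
  /-- (e) each subtree has at most `ℓ` vertices -/
  small : ∀ S ∈ SA ∪ SB, S.card ≤ ℓ
  /-- (f) no tree of `S_A` meets the neighbourhood of `W_B`, and vice versa -/
  niceA : ∀ S ∈ SA, ∀ v ∈ S, ∀ w ∈ WB, ¬ T.Adj w v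
  niceB : ∀ S ∈ SB, ∀ v ∈ S, ∀ w ∈ WA, ¬ T.Adj w v
  /-- (g) each subtree has its seed in `W_A ∪ W_B` -/
  seedMem : ∀ S ∈ SA ∪ SB, ∃ x ∈ WA ∪ WB, IsSeed T r S x
  /-- (h) at most two vertices of `W_A ∪ W_B` have a neighbour in a given subtree -/
  twoSeeds : ∀ S ∈ SA ∪ SB,
    ({z ∈ ((WA ∪ WB : Finset V) : Set V) | ∃ v ∈ S, T.Adj z v}).ncard ≤ 2
  /-- (i) two distinct cut vertices with neighbours in the same subtree are at distance ≥ 6 -/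
  sixApart : ∀ S ∈ SA ∪ SB, ∀ z₁ ∈ WA ∪ WB, ∀ z₂ ∈ WA ∪ WB, z₁ ≠ z₂ →
    (∃ v ∈ S, T.Adj z₁ v) → (∃ v ∈ S, T.Adj z₂ v) → 6 ≤ T.dist z₁ z₂
  /-- (j) vertices of two distinct internal subtrees comparable in the tree order are at
  distance more than 2 -/
  internalSep : ∀ S₁ ∈ SA ∪ SB, ∀ S₂ ∈ SA ∪ SB, S₁ ≠ S₂ →
    ¬ IsEndSubtree T r S₁ → ¬ IsEndSubtree T r S₂ →
    ∀ v₁ ∈ S₁, ∀ v₂ ∈ S₂, TreeLE T r v₁ v₂ → 2 < T.dist v₁ v₂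
  /-- (k) `S_B` contains no internal subtree -/
  noInternalB : ∀ S ∈ SB, IsEndSubtree T r S
  /-- (l) the end subtrees in `S_A` have at least as many vertices in total as `S_B` -/
  endBound : (∑ S ∈ SB, S.card) ≤ ∑ S ∈ SA.filter (fun S => IsEndSubtree T r S), S.card

/-- A hub: a connected component of the forest induced on the cut vertices `Wset`, i.e. a
maximal connected subset of `Wset`. -/
def IsHub {V : Type} (T : SimpleGraph V) (Wset : Finset V) (Hb : Finset V) : Prop :=
  Hb.Nonempty ∧ Hb ⊆ Wset ∧ (T.induce (Hb : Set V)).Connected ∧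
    ∀ H' : Finset V, Hb ⊆ H' → H' ⊆ Wset → (T.induce (H' : Set V)).Connected → H' = Hb

/-
The skeleton is grown greedily from the hub containing the root. As long as some vertex is
uncovered, connectedness of `T` gives an edge leaving the current union; the hub or shrub
containing its outer endpoint is connected, so appending it keeps the union connected and
strictly enlarges it.
-/

namespace SimpleGraph

variable {V : Type*} {G : SimpleGraph V} {m : ℕ}

lemma setOf_exists_le_snoc_castSucc (X : Fin (m + 1) → Finset V) (A : Finset V)
    (i : Fin (m + 1)) :
    {v | ∃ j ≤ i.castSucc, v ∈ Fin.snoc (α := fun _ => Finset V) X A j} =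
      {v | ∃ j ≤ i, v ∈ X j} := by
  ext v
  constructor
  · rintro ⟨j, hj, hv⟩
    obtain ⟨j, rfl⟩ :=
      Fin.exists_castSucc_eq.mpr (lt_of_le_of_lt hj (Fin.castSucc_lt_last i)).ne
    exact ⟨j, Fin.castSucc_le_castSucc_iff.mp hj, by rwa [Fin.snoc_castSucc] at hv⟩
  · rintro ⟨j, hj, hv⟩
    exact ⟨j.castSucc, Fin.castSucc_le_castSucc_iff.mpr hj, by rwa [Fin.snoc_castSucc]⟩

lemma setOf_exists_le_snoc_last (X : Fin (m + 1) → Finset V) (A : Finset V) :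
    {v | ∃ j ≤ Fin.last (m + 1), v ∈ Fin.snoc (α := fun _ => Finset V) X A j} =
      {v | ∃ j ≤ Fin.last m, v ∈ X j} ∪ A := by
  ext v
  simp only [Fin.le_last, true_and, Set.mem_ofPred_eq, Set.mem_union, Finset.mem_coe,
    Fin.exists_fin_succ', Fin.snoc_castSucc, Fin.snoc_last]

lemma biUnion_ssubset_biUnion_snoc [DecidableEq V] (X : Fin (m + 1) → Finset V)
    {A : Finset V} {b : V} (hbA : b ∈ A) (hbX : ∀ i, b ∉ X i) :
    Finset.univ.biUnion X ⊂ Finset.univ.biUnion (Fin.snoc (α := fun _ => Finset V) X A) := by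
  simp only [Finset.ssubset_iff_subset_ne, Finset.subset_iff, ne_eq, Finset.ext_iff,
    Finset.mem_biUnion, Finset.mem_univ, true_and, Fin.exists_fin_succ', Fin.snoc_castSucc,
    Fin.snoc_last, not_forall]
  exact ⟨fun _ => Or.inl, b, by simp [hbX, hbA]⟩

variable (G) in
/-- When `P` selects the hubs and shrubs of a fine partition, a covering enumeration starting at
the hub of the root is an ordered skeleton. -/
def IsConnectedEnumeration (P : Finset V → Prop) (X : Fin (m + 1) → Finset V) : Prop :=
  (∀ i, P (X i)) ∧ ∀ i, (G.induce {v | ∃ j ≤ i, v ∈ X j}).Connected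

lemma isConnectedEnumeration_const {P : Finset V → Prop} {A : Finset V} (hA : P A)
    (hAconn : (G.induce (A : Set V)).Connected) :
    G.IsConnectedEnumeration P (fun _ : Fin 1 => A) := by
  refine ⟨fun _ => hA, fun i => ?_⟩
  have hprefix : {v | ∃ j ≤ i, v ∈ A} = A :=
    Set.ext fun v => ⟨fun ⟨_, _, hv⟩ => hv, fun hv => ⟨i, le_rfl, hv⟩⟩
  rwa [hprefix]

lemma IsConnectedEnumeration.snoc {P : Finset V → Prop} {X : Fin (m + 1) → Finset V}
    (hX : G.IsConnectedEnumeration P X) {A : Finset V} (hA : P A)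
    (hAconn : (G.induce (A : Set V)).Connected) {a b : V} (ha : ∃ j, a ∈ X j) (hb : b ∈ A)
    (hab : G.Adj a b) :
    G.IsConnectedEnumeration P (Fin.snoc (α := fun _ => Finset V) X A) := by
  refine ⟨Fin.lastCases (by simpa using hA) (fun i => by simpa using hX.1 i),
    Fin.lastCases ?_ (fun i => ?_)⟩
  · rw [setOf_exists_le_snoc_last]
    exact connected_induce_union (hX.2 _).preconnected hAconn.preconnected
      (ha.imp fun j hj => ⟨Fin.le_last j, hj⟩) hb hab
  · rw [setOf_exists_le_snoc_castSucc]
    exact hX.2 i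

lemma Preconnected.exists_isConnectedEnumeration_covering [Fintype V] [DecidableEq V]
    (hG : G.Preconnected) {P : Finset V → Prop} (hP : ∀ A, P A → (G.induce (A : Set V)).Connected)
    (hcover : ∀ v, ∃ A, P A ∧ v ∈ A) {A₀ : Finset V} (hA₀ : P A₀) :
    ∃ (m : ℕ) (X : Fin (m + 1) → Finset V),
      X 0 = A₀ ∧ G.IsConnectedEnumeration P X ∧ ∀ v, ∃ i, v ∈ X i := by
  let achievable : Finset (Finset V) := Finset.univ.filter fun U =>
    ∃ (m : ℕ) (X : Fin (m + 1) → Finset V), X 0 = A₀ ∧ G.IsConnectedEnumeration P X ∧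
      Finset.univ.biUnion X = U
  have hA₀mem : A₀ ∈ achievable := Finset.mem_filter.mpr
    ⟨Finset.mem_univ _, 0, _, rfl, isConnectedEnumeration_const hA₀ (hP _ hA₀), by simp⟩
  obtain ⟨U, hU, hUmax⟩ := achievable.exists_max_image Finset.card ⟨A₀, hA₀mem⟩
  obtain ⟨m, X, hX0, hX, rfl⟩ := (Finset.mem_filter.mp hU).2
  refine ⟨m, X, hX0, hX, fun v => ?_⟩
  by_contra! hv
  obtain ⟨u, hu⟩ := (hP _ (hX.1 0)).nonempty
  obtain ⟨d, -, hd₁, hd₂⟩ := (hG u v).some.exists_boundary_dart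
    {w | ∃ i, w ∈ X i} ⟨0, hu⟩ (by simpa using hv)
  obtain ⟨A, hA, hdA⟩ := hcover d.snd
  have hmem : Finset.univ.biUnion (Fin.snoc (α := fun _ => Finset V) X A) ∈ achievable :=
    Finset.mem_filter.mpr ⟨Finset.mem_univ _, m + 1, _, by simpa using hX0,
      hX.snoc hA (hP A hA) hd₁ hdA d.adj, rfl⟩
  have hlt := Finset.card_lt_card (biUnion_ssubset_biUnion_snoc X hdA (by simpa using hd₂))
  exact (hUmax _ hmem).not_gt hlt

end SimpleGraph

lemma exists_isHub_mem {V : Type} [Fintype V] (T : SimpleGraph V) {W : Finset V} {w : V}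
    (hw : w ∈ W) : ∃ H, IsHub T W H ∧ w ∈ H := by
  let C := W.powerset.filter fun H : Finset V => w ∈ H ∧ (T.induce (H : Set V)).Connected
  have hsingleton : {w} ∈ C := by
    refine Finset.mem_filter.mpr ⟨Finset.mem_powerset.mpr (Finset.singleton_subset_iff.mpr hw),
      Finset.mem_singleton_self w, ?_⟩
    rw [Finset.coe_singleton, SimpleGraph.induce_singleton_eq_top]
    exact SimpleGraph.connected_top
  obtain ⟨H, hH, hmax⟩ := C.exists_max_image Finset.card ⟨_, hsingleton⟩
  simp only [C, Finset.mem_filter, Finset.mem_powerset] at hH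
  refine ⟨H, ⟨⟨w, hH.2.1⟩, hH.1, hH.2.2, fun H' hHH' hH'W hH' => ?_⟩, hH.2.1⟩
  exact (Finset.eq_of_subset_of_card_le hHH'
    (hmax H' (by simp [C, hH'W, hHH' hH.2.1, hH']))).symm

namespace IsFinePartition

variable {V : Type} [Fintype V] [DecidableEq V] {T : SimpleGraph V} {r : V} {k ℓ : ℕ}
  {WA WB : Finset V} {SA SB : Finset (Finset V)}

lemma exists_hub_or_shrub_mem (hfp : IsFinePartition T r k ℓ WA WB SA SB) (v : V) :
    ∃ A, (IsHub T (WA ∪ WB) A ∨ A ∈ SA ∪ SB) ∧ v ∈ A := by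
  rcases hfp.cover v with hv | hv | ⟨S, hS, hvS⟩
  · obtain ⟨H, hH, hvH⟩ := exists_isHub_mem T (Finset.mem_union_left WB hv)
    exact ⟨H, Or.inl hH, hvH⟩
  · obtain ⟨H, hH, hvH⟩ := exists_isHub_mem T (Finset.mem_union_right WA hv)
    exact ⟨H, Or.inl hH, hvH⟩
  · exact ⟨S, Or.inr hS, hvS⟩

lemma induce_connected_of_hub_or_shrub (hfp : IsFinePartition T r k ℓ WA WB SA SB)
    (A : Finset V) (hA : IsHub T (WA ∪ WB) A ∨ A ∈ SA ∪ SB) :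
    (T.induce (A : Set V)).Connected :=
  hA.elim (fun hH => hH.2.2.1) fun hS => (hfp.subtree A hS).2

end IsFinePartition

theorem stmt2_general (V : Type) [Fintype V] [DecidableEq V]
    (T : SimpleGraph V) (hT : T.IsTree) (k : ℕ)
    (r : V) (ℓ : ℕ) (WA WB : Finset V) (SA SB : Finset (Finset V))
    (hfp : IsFinePartition T r k ℓ WA WB SA SB) :
    ∃ (m : ℕ) (X : Fin (m + 1) → Finset V),
      (IsHub T (WA ∪ WB) (X 0) ∧ r ∈ X 0) ∧
      (∀ i, IsHub T (WA ∪ WB) (X i) ∨ X i ∈ SA ∪ SB) ∧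
      (∀ v : V, ∃ i, v ∈ X i) ∧
      (∀ i : Fin (m + 1), (T.induce {v : V | ∃ j, j ≤ i ∧ v ∈ X j}).Connected) := by
  obtain ⟨H₀, hH₀, hrH₀⟩ := exists_isHub_mem T hfp.rootMem
  obtain ⟨m, X, rfl, ⟨hXpiece, hXconn⟩, hXcover⟩ :=
    hT.connected.preconnected.exists_isConnectedEnumeration_covering
      hfp.induce_connected_of_hub_or_shrub hfp.exists_hub_or_shrub_mem (Or.inl hH₀)
  exact ⟨m, X, ⟨hH₀, hrH₀⟩, hXpiece, hXcover, hXconn⟩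

/-- Every `ℓ`-fine partition of a rooted tree `(T,r)` has an ordered
skeleton: a sequence `X₀, …, X_m` of hubs and shrubs, with `X₀` a hub containing `r`,
covering `V(T)`, such that each initial union `X₀ ∪ ⋯ ∪ X_i` induces a connected subgraph. -/
theorem stmt2 (V : Type) [Fintype V] [DecidableEq V]
    (T : SimpleGraph V) (hT : T.IsTree) (k : ℕ) (hk : Fintype.card V = k)
    (r : V) (ℓ : ℕ) (WA WB : Finset V) (SA SB : Finset (Finset V))
    (hfp : IsFinePartition T r k ℓ WA WB SA SB) :
    ∃ (m : ℕ) (X : Fin (m + 1) → Finset V),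
      (IsHub T (WA ∪ WB) (X 0) ∧ r ∈ X 0) ∧
      (∀ i, IsHub T (WA ∪ WB) (X i) ∨ X i ∈ SA ∪ SB) ∧
      (∀ v : V, ∃ i, v ∈ X i) ∧
      (∀ i : Fin (m + 1), (T.induce {v : V | ∃ j, j ≤ i ∧ v ∈ X j}).Connected) :=
  stmt2_general V T hT k r ℓ WA WB SA SB hfp
end

section
/- Let K ≥ 0 and let {x_i}_{i=1}^{s} and {y_i}_{i=1}^{s} be two families of reals in [0, K] with ∑_i x_i > 0. Write X := ∑_i x_i, Y := ∑_i y_i, and γ := Y/X. Then for each X' ∈ [0, X] there is a set I ⊆ {1,…,s} such that (a) ∑_{i ∈ I} x_i ≤ X' ≤ ∑_{i ∈ I} x_i + K, and (b) ∑_{i ∈ I} y_i − K ≤ γ·X' ≤ ∑_{i ∈ I} y_i + 2K. -/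
open Finset

namespace Stmt5Aux

def FF (s a : ℕ) : Finset (Fin s) := Finset.univ.filter fun i => (i : ℕ) < a
def GG (s b : ℕ) : Finset (Fin s) := Finset.univ.filter fun i => s ≤ (i : ℕ) + b

lemma mem_FF {s a : ℕ} {i : Fin s} : i ∈ FF s a ↔ (i : ℕ) < a := by simp [FF]
lemma mem_GG {s b : ℕ} {i : Fin s} : i ∈ GG s b ↔ s ≤ (i : ℕ) + b := by simp [GG]

lemma FF_zero (s : ℕ) : FF s 0 = ∅ := by
  ext i; simp [mem_FF]

lemma GG_zero (s : ℕ) : GG s 0 = ∅ := by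
  ext i
  have := i.isLt
  simp only [mem_GG, Finset.notMem_empty, iff_false]
  omega

lemma FF_univ {s a : ℕ} (h : s ≤ a) : FF s a = Finset.univ := by
  ext i; have := i.isLt; simp [mem_FF]; omega

lemma FF_mono {s a a' : ℕ} (h : a ≤ a') : FF s a ⊆ FF s a' := by
  intro i hi; rw [mem_FF] at *; omega

lemma GG_mono {s b b' : ℕ} (h : b ≤ b') : GG s b ⊆ GG s b' := by
  intro i hi; rw [mem_GG] at *; omega

lemma FF_succ {s a : ℕ} (h : a < s) : FF s (a + 1) = insert ⟨a, h⟩ (FF s a) := by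
  ext i; simp [mem_FF, Fin.ext_iff]; omega

lemma notMem_FF {s a : ℕ} (h : a < s) : (⟨a, h⟩ : Fin s) ∉ FF s a := by
  simp [mem_FF]

lemma GG_succ {s b : ℕ} (h : b < s) :
    GG s (b + 1) = insert ⟨s - b - 1, by omega⟩ (GG s b) := by
  ext i; simp [mem_GG, Fin.ext_iff]; omega

lemma notMem_GG {s b : ℕ} (h : b < s) : (⟨s - b - 1, by omega⟩ : Fin s) ∉ GG s b := by
  simp only [mem_GG, Fin.val_mk]
  omega

lemma disjoint_FF_GG {s a b : ℕ} (h : a + b ≤ s) : Disjoint (FF s a) (GG s b) := by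
  rw [Finset.disjoint_left]
  intro i hi hgi
  rw [mem_FF] at hi
  rw [mem_GG] at hgi
  omega

lemma union_FF_GG {s a : ℕ} (h : a ≤ s) : FF s a ∪ GG s (s - a) = Finset.univ := by
  ext i; have := i.isLt; simp [mem_FF, mem_GG]; omega

lemma GG_compl {s b : ℕ} (h : b ≤ s) : GG s b = (FF s (s - b))ᶜ := by
  ext i
  have := i.isLt
  simp only [mem_GG, Finset.mem_compl, mem_FF, not_lt]
  omega

theorem sorted_stmt5 (K : ℝ) (hK : 0 ≤ K) (s : ℕ) (x y : Fin s → ℝ)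
    (hx : ∀ i, x i ∈ Set.Icc 0 K) (hy : ∀ i, y i ∈ Set.Icc 0 K)
    (hX : 0 < ∑ t, x t)
    (hsort : ∀ i j : Fin s, i ≤ j →
      y j * (∑ t, x t) - x j * (∑ t, y t) ≤ y i * (∑ t, x t) - x i * (∑ t, y t))
    (X' : ℝ) (hX'0 : 0 ≤ X') (hX'X : X' ≤ ∑ t, x t) :
    ∃ I : Finset (Fin s),
      ((∑ i ∈ I, x i ≤ X' ∧ X' ≤ (∑ i ∈ I, x i) + K) ∧
        ((∑ i ∈ I, y i) - K ≤ (∑ t, y t) / (∑ t, x t) * X' ∧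
          (∑ t, y t) / (∑ t, x t) * X' ≤ (∑ i ∈ I, y i) + 2 * K)) := by
  classical
  set X := ∑ t, x t with hXd
  set Y := ∑ t, y t with hYd
  have hX0 : (0:ℝ) ≤ X := le_of_lt hX
  have hXne : X ≠ 0 := ne_of_gt hX
  have hY0 : (0:ℝ) ≤ Y := by
    rw [hYd]; exact Finset.sum_nonneg fun i _ => (hy i).1
  have hx0 : ∀ i, 0 ≤ x i := fun i => (hx i).1
  have hxK : ∀ i, x i ≤ K := fun i => (hx i).2
  have hy0 : ∀ i, 0 ≤ y i := fun i => (hy i).1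
  have hyK : ∀ i, y i ≤ K := fun i => (hy i).2
  set E : Fin s → ℝ := fun i => y i * X - x i * Y with hEd
  have hEsum : ∀ I : Finset (Fin s),
      ∑ i ∈ I, E i = (∑ i ∈ I, y i) * X - (∑ i ∈ I, x i) * Y := by
    intro I
    rw [hEd, Finset.sum_sub_distrib, ← Finset.sum_mul, ← Finset.sum_mul]
  have hEtot : ∑ i, E i = 0 := by
    rw [hEsum Finset.univ, ← hXd, ← hYd]; ring
  have hsortE : ∀ i j : Fin s, i ≤ j → E j ≤ E i := by
    intro i j h
    simpa [hEd] using hsort i j h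
  have hprefix : ∀ a : ℕ, (0:ℝ) ≤ ∑ i ∈ FF s a, E i := by
    intro a
    rcases le_or_gt s a with h | h
    · rw [FF_univ h, hEtot]
    · rcases le_or_gt 0 (E ⟨a, h⟩) with ht | ht
      · refine Finset.sum_nonneg fun i hi => le_trans ht ?_
        exact hsortE i ⟨a, h⟩ (by rw [Fin.le_def]; exact le_of_lt (mem_FF.mp hi))
      · have hc : ∑ i ∈ (FF s a)ᶜ, E i ≤ 0 := by
          refine Finset.sum_nonpos fun i hi => ?_
          have hia : a ≤ (i : ℕ) := by
            have h2 := Finset.mem_compl.mp hi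
            rw [mem_FF] at h2; omega
          exact le_of_lt (lt_of_le_of_lt (hsortE ⟨a, h⟩ i (by rw [Fin.le_def]; exact hia)) ht)
        have hsplit := Finset.sum_add_sum_compl (FF s a) E
        rw [hEtot] at hsplit
        linarith
  have hsuffix : ∀ b : ℕ, b ≤ s → ∑ i ∈ GG s b, E i ≤ 0 := by
    intro b hb
    rw [GG_compl hb]
    have hsplit := Finset.sum_add_sum_compl (FF s (s - b)) E
    rw [hEtot] at hsplit
    have := hprefix (s - b)
    linarith
  set k := Nat.findGreatest (fun a => (∑ i ∈ FF s a, x i) ≤ X') s with hkd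
  have hbase0 : (∑ i ∈ FF s 0, x i) ≤ X' := by
    rw [FF_zero, Finset.sum_empty]; exact hX'0
  have hkP : (∑ i ∈ FF s k, x i) ≤ X' := by
    rw [hkd]
    exact Nat.findGreatest_spec (P := fun a => (∑ i ∈ FF s a, x i) ≤ X') (Nat.zero_le s) hbase0
  have hkle : k ≤ s := by rw [hkd]; exact Nat.findGreatest_le s
  clear_value k
  rcases eq_or_lt_of_le hX'X with hXX | hXX
  · -- X' = X : take everything
    refine ⟨Finset.univ, ?_⟩
    have hg : Y / X * X' = Y := by rw [hXX, div_mul_cancel₀ Y hXne]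
    constructor
    · constructor
      · rw [← hXd]; linarith
      · rw [← hXd]; linarith
    · constructor
      · rw [← hYd, hg]; linarith
      · rw [← hYd, hg]; linarith
  · -- X' < X
    have hks : k < s := by
      rcases lt_or_eq_of_le hkle with h | h
      · exact h
      · exfalso
        rw [h, FF_univ le_rfl, ← hXd] at hkP
        linarith
    have hk1 : X' < ∑ i ∈ FF s (k + 1), x i := by
      have h1 : ¬ ((∑ i ∈ FF s (k + 1), x i) ≤ X') := by
        refine Nat.findGreatest_is_greatest (P := fun a => (∑ i ∈ FF s a, x i) ≤ X')
          (n := s) (k := k + 1) ?_ ?_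
        · rw [← hkd]; omega
        · omega
      exact not_le.mp h1
    set bb : ℕ → ℕ := fun a =>
      Nat.findGreatest (fun m => (∑ i ∈ FF s a, x i) + (∑ i ∈ GG s m, x i) ≤ X') (s - a)
      with hbbd
    have hbbeq : ∀ a, bb a =
        Nat.findGreatest (fun m => (∑ i ∈ FF s a, x i) + (∑ i ∈ GG s m, x i) ≤ X') (s - a) := by
      intro a; rw [hbbd]
    clear_value bb
    have hbbP : ∀ a, a ≤ k → (∑ i ∈ FF s a, x i) + (∑ i ∈ GG s (bb a), x i) ≤ X' := by
      intro a ha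
      have h0 : (∑ i ∈ FF s a, x i) + (∑ i ∈ GG s 0, x i) ≤ X' := by
        rw [GG_zero, Finset.sum_empty, add_zero]
        exact le_trans
          (Finset.sum_le_sum_of_subset_of_nonneg (FF_mono ha) fun i _ _ => hx0 i) hkP
      rw [hbbeq a]
      exact Nat.findGreatest_spec
        (P := fun m => (∑ i ∈ FF s a, x i) + (∑ i ∈ GG s m, x i) ≤ X') (Nat.zero_le _) h0
    have hbble : ∀ a, bb a ≤ s - a := by
      intro a; rw [hbbeq a]; exact Nat.findGreatest_le _
    have hbblt : ∀ a, a ≤ k → bb a < s - a := by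
      intro a ha
      rcases lt_or_eq_of_le (hbble a) with h | h
      · exact h
      · exfalso
        have hsum : (∑ i ∈ FF s a, x i) + (∑ i ∈ GG s (s - a), x i) = X := by
          rw [← Finset.sum_union (disjoint_FF_GG (by omega)), union_FF_GG (by omega), ← hXd]
        have h2 := hbbP a ha
        rw [h, hsum] at h2
        linarith
    have hwindow : ∀ a, a ≤ k →
        X' < (∑ i ∈ FF s a, x i) + (∑ i ∈ GG s (bb a), x i) + K := by
      intro a ha
      have hlt : bb a < s - a := hbblt a ha
      have hbs : bb a < s := by omega
      have hng : ¬ ((∑ i ∈ FF s a, x i) + (∑ i ∈ GG s (bb a + 1), x i) ≤ X') :=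
        Nat.findGreatest_is_greatest
          (P := fun m => (∑ i ∈ FF s a, x i) + (∑ i ∈ GG s m, x i) ≤ X') (n := s - a)
          (k := bb a + 1) (by rw [← hbbeq a]; omega) (by omega)
      rw [GG_succ hbs, Finset.sum_insert (notMem_GG hbs)] at hng
      push_neg at hng
      have hxK' := hxK ⟨s - bb a - 1, by omega⟩
      linarith
    have hbbmono : ∀ a, a + 1 ≤ k → bb (a + 1) ≤ bb a := by
      intro a ha
      by_contra hcon
      push_neg at hcon
      have hle : bb (a + 1) ≤ s - a := le_trans (hbble (a + 1)) (by omega)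
      have hng : ¬ ((∑ i ∈ FF s a, x i) + (∑ i ∈ GG s (bb (a + 1)), x i) ≤ X') :=
        Nat.findGreatest_is_greatest
          (P := fun m => (∑ i ∈ FF s a, x i) + (∑ i ∈ GG s m, x i) ≤ X') (n := s - a)
          (k := bb (a + 1)) (by rw [← hbbeq a]; omega) hle
      have hP : (∑ i ∈ FF s (a + 1), x i) + (∑ i ∈ GG s (bb (a + 1)), x i) ≤ X' :=
        hbbP (a + 1) ha
      have hsub : (∑ i ∈ FF s a, x i) ≤ ∑ i ∈ FF s (a + 1), x i :=
        Finset.sum_le_sum_of_subset_of_nonneg (FF_mono (by omega)) fun i _ _ => hx0 i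
      exact hng (by linarith)
    have hTchain : ∀ a, a + 1 ≤ k →
        (∑ i ∈ FF s (a + 1), y i) + (∑ i ∈ GG s (bb (a + 1)), y i) ≤
        (∑ i ∈ FF s a, y i) + (∑ i ∈ GG s (bb a), y i) + K := by
      intro a ha
      have has : a < s := by omega
      have h1 : (∑ i ∈ FF s (a + 1), y i) = y ⟨a, has⟩ + ∑ i ∈ FF s a, y i := by
        rw [FF_succ has, Finset.sum_insert (notMem_FF has)]
      have h2 : (∑ i ∈ GG s (bb (a + 1)), y i) ≤ ∑ i ∈ GG s (bb a), y i :=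
        Finset.sum_le_sum_of_subset_of_nonneg (GG_mono (hbbmono a ha)) fun i _ _ => hy0 i
      have h3 := hyK ⟨a, has⟩
      linarith
    have hCk : X' * Y ≤ ((∑ i ∈ FF s k, y i) + K) * X := by
      have h1 := hprefix (k + 1)
      rw [hEsum] at h1
      have h2 : X' * Y ≤ (∑ i ∈ FF s (k + 1), x i) * Y :=
        mul_le_mul_of_nonneg_right (le_of_lt hk1) hY0
      have h3 : (∑ i ∈ FF s (k + 1), y i) = y ⟨k, hks⟩ + ∑ i ∈ FF s k, y i := by
        rw [FF_succ hks, Finset.sum_insert (notMem_FF hks)]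
      have h4 : y ⟨k, hks⟩ * X ≤ K * X := mul_le_mul_of_nonneg_right (hyK _) hX0
      rw [h3] at h1
      linarith [h1, h2, h4]
    have hDk0 : (0:ℝ) ≤ ∑ i ∈ GG s (bb k), y i := Finset.sum_nonneg fun i _ => hy0 i
    have hQk : X' * Y ≤ ((∑ i ∈ FF s k, y i) + (∑ i ∈ GG s (bb k), y i) + 2 * K) * X := by
      have hKX : (0:ℝ) ≤ K * X := mul_nonneg hK hX0
      have hDX : (0:ℝ) ≤ (∑ i ∈ GG s (bb k), y i) * X := mul_nonneg hDk0 hX0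
      linarith [hCk]
    have hQex : ∃ a, X' * Y ≤
        ((∑ i ∈ FF s a, y i) + (∑ i ∈ GG s (bb a), y i) + 2 * K) * X := ⟨k, hQk⟩
    set aa := Nat.find hQex with haad
    have hQaa : X' * Y ≤
        ((∑ i ∈ FF s aa, y i) + (∑ i ∈ GG s (bb aa), y i) + 2 * K) * X := by
      rw [haad]; exact Nat.find_spec hQex
    have haak : aa ≤ k := by rw [haad]; exact Nat.find_min' hQex hQk
    clear_value aa
    have hupper : ((∑ i ∈ FF s aa, y i) + (∑ i ∈ GG s (bb aa), y i) - K) * X ≤ X' * Y := by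
      rcases Nat.eq_zero_or_pos aa with h0 | hpos
      · have hbs : bb 0 ≤ s := le_trans (hbble 0) (by omega)
        have hsuf := hsuffix (bb 0) hbs
        rw [hEsum] at hsuf
        have hBX' : (∑ i ∈ GG s (bb 0), x i) ≤ X' := by
          have h2 := hbbP 0 (Nat.zero_le k)
          rw [FF_zero, Finset.sum_empty, zero_add] at h2
          exact h2
        have hBY : (∑ i ∈ GG s (bb 0), x i) * Y ≤ X' * Y :=
          mul_le_mul_of_nonneg_right hBX' hY0
        have hKX : (0:ℝ) ≤ K * X := mul_nonneg hK hX0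
        rw [h0, FF_zero, Finset.sum_empty]
        linarith [hsuf, hBY, hKX]
      · obtain ⟨a', ha'⟩ : ∃ a', aa = a' + 1 := ⟨aa - 1, by omega⟩
        have hnq := Nat.find_min hQex (m := a') (by rw [← haad]; omega)
        push_neg at hnq
        have hch := hTchain a' (by omega)
        rw [← ha'] at hch
        have hmul := mul_le_mul_of_nonneg_right
          (show (∑ i ∈ FF s aa, y i) + (∑ i ∈ GG s (bb aa), y i) - K ≤
            (∑ i ∈ FF s a', y i) + (∑ i ∈ GG s (bb a'), y i) from by linarith) hX0
        have hKX : (0:ℝ) ≤ K * X := mul_nonneg hK hX0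
        linarith [hmul, hnq, hKX]
    refine ⟨FF s aa ∪ GG s (bb aa), ?_⟩
    have hdisj : Disjoint (FF s aa) (GG s (bb aa)) := by
      refine disjoint_FF_GG ?_
      have := hbble aa
      omega
    have hsx2 : ∑ i ∈ FF s aa ∪ GG s (bb aa), x i
        = (∑ i ∈ FF s aa, x i) + (∑ i ∈ GG s (bb aa), x i) := Finset.sum_union hdisj
    have hsy2 : ∑ i ∈ FF s aa ∪ GG s (bb aa), y i
        = (∑ i ∈ FF s aa, y i) + (∑ i ∈ GG s (bb aa), y i) := Finset.sum_union hdisj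
    have hSle : (∑ i ∈ FF s aa, x i) + (∑ i ∈ GG s (bb aa), x i) ≤ X' := hbbP aa haak
    have hSwin := hwindow aa haak
    have hYX : Y / X * X' = Y * X' / X := by rw [div_mul_eq_mul_div]
    constructor
    · constructor
      · rw [hsx2]; exact hSle
      · rw [hsx2]; linarith
    · constructor
      · rw [hsy2, hYX, le_div_iff₀ hX]
        linarith [hupper]
      · rw [hsy2, hYX, div_le_iff₀ hX]
        linarith [hQaa]
end Stmt5Aux

/-- Given two families of reals `x i, y i ∈ [0,K]` with `∑ x i > 0`,
writing `X = ∑ x i`, `Y = ∑ y i` and `γ = Y / X`, for each `X' ∈ [0, X]` there is an index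
set `I` with `∑_{i∈I} x i ≤ X' ≤ ∑_{i∈I} x i + K` and
`∑_{i∈I} y i − K ≤ γ X' ≤ ∑_{i∈I} y i + 2K`. -/
theorem stmt5 (K : ℝ) (hK : 0 ≤ K) (s : ℕ) (hs : 0 < s) (x y : Fin s → ℝ)
    (hx : ∀ i, x i ∈ Set.Icc 0 K) (hy : ∀ i, y i ∈ Set.Icc 0 K)
    (hX : 0 < ∑ i, x i) (X' : ℝ) (hX' : X' ∈ Set.Icc 0 (∑ i, x i)) :
    ∃ I : Finset (Fin s),
      ((∑ i ∈ I, x i ≤ X' ∧ X' ≤ (∑ i ∈ I, x i) + K) ∧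
        ((∑ i ∈ I, y i) - K ≤ (∑ i, y i) / (∑ i, x i) * X' ∧
          (∑ i, y i) / (∑ i, x i) * X' ≤ (∑ i ∈ I, y i) + 2 * K)) := by
  classical
  obtain ⟨hX'0, hX'X⟩ := hX'
  set f : Fin s → ℝ := fun i => x i * (∑ t, y t) - y i * (∑ t, x t) with hfd
  set σ := Tuple.sort f with hσd
  have hmono : Monotone (f ∘ σ) := by rw [hσd]; exact Tuple.monotone_sort f
  have hsx : ∑ t, x (σ t) = ∑ t, x t := Equiv.sum_comp σ x
  have hsy : ∑ t, y (σ t) = ∑ t, y t := Equiv.sum_comp σ y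
  obtain ⟨I, h⟩ := Stmt5Aux.sorted_stmt5 K hK s (fun i => x (σ i)) (fun i => y (σ i))
    (fun i => hx (σ i)) (fun i => hy (σ i))
    (by rw [hsx]; exact hX)
    (by
      intro i j hij
      have h2 := hmono hij
      simp only [Function.comp_apply, hfd] at h2
      rw [hsx, hsy]
      linarith)
    X' hX'0 (by rw [hsx]; exact hX'X)
  rw [hsx, hsy] at h
  refine ⟨I.map σ.toEmbedding, ?_⟩
  have e1 : ∑ i ∈ I.map σ.toEmbedding, x i = ∑ i ∈ I, x (σ i) := by
    rw [Finset.sum_map]; rfl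
  have e2 : ∑ i ∈ I.map σ.toEmbedding, y i = ∑ i ∈ I, y (σ i) := by
    rw [Finset.sum_map]; rfl
  rw [e1, e2]
  exact h
end

section
/- Let Λ, k be positive integers and let ε, γ ∈ (0, 1/2) with γ² > ε. Suppose 𝔼 is a (Λ,ε,γ,k)-avoiding set with respect to a family 𝒟 of (γk,γ)-dense spots in a graph H. Suppose (T₁,r₁),…,(T_ℓ,r_ℓ) are rooted trees of total order at most γk/2. Let U ⊆ V(H) with |U| ≤ Λk, and let U* ⊆ 𝔼 with |U*| ≥ εk + ℓ. Then there are mutually disjoint (r_i ↪ U*, V(T_i)∖{r_i} ↪ V(H)∖U)-embeddings of the trees (T_i,r_i) in H. -/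
/-- An `(m,γ)`-dense spot in a graph `G`: a non-empty bipartite subgraph `(A,B;F)` of `G`
with density greater than `γ` and minimum degree greater than `m`. -/
structure DenseSpot (V : Type) [Fintype V] (G : SimpleGraph V) (m γ : ℝ) where
  A : Finset V
  B : Finset V
  F : SimpleGraph V
  disj : Disjoint A B
  le : F ≤ G
  bipartite : ∀ ⦃a b : V⦄, F.Adj a b → (a ∈ A ∧ b ∈ B) ∨ (a ∈ B ∧ b ∈ A)
  nonempty : ∃ a b, F.Adj a b
  dense : γ * ((A.card : ℝ) * (B.card : ℝ)) < (F.edgeSet.ncard : ℝ)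
  mindeg : ∀ v : V, v ∈ A ∨ v ∈ B → m < ((F.neighborSet v).ncard : ℝ)

/-- The vertex set of a dense spot. -/
def DenseSpot.verts {V : Type} [Fintype V] {G : SimpleGraph V} {m γ : ℝ}
    (D : DenseSpot V G m γ) : Set V :=
  (↑D.A : Set V) ∪ (↑D.B : Set V)

/-- `E` is a `(Λ,ε,γ,k)`-avoiding set with respect to a family `𝒟` of dense spots:
`E ⊆ ⋃_{D ∈ 𝒟} V(D)` and for every `U` with `|U| ≤ Λk`, all but at most `εk` vertices
`v ∈ E` lie in some spot `D ∈ 𝒟` with `|U ∩ V(D)| ≤ γ²k`. -/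
def IsAvoiding {V : Type} [Fintype V] {G : SimpleGraph V} {m : ℝ}
    (Λ : ℕ) (ε γ : ℝ) (k : ℕ) (𝒟 : Set (DenseSpot V G m γ)) (E : Set V) : Prop :=
  (E ⊆ ⋃ D ∈ 𝒟, D.verts) ∧
    ∀ U : Set V, (U.ncard : ℝ) ≤ (Λ : ℝ) * k →
      (({v ∈ E | ¬ ∃ D ∈ 𝒟, v ∈ D.verts ∧ ((U ∩ D.verts).ncard : ℝ) ≤ γ ^ 2 * k}).ncard : ℝ)
        ≤ ε * k

/-!
At most `εk` vertices of `𝔼` lie in no dense spot meeting `U` in at most `γ²k` vertices, so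
`U*` contains `ℓ` distinct roots `v_i` with such spots `D_i ∋ v_i`. The trees are embedded one
after the other, greedily from the root, tree `i` inside `D_i`: every vertex of `D_i` has more
than `γk ≥ γ²k + γk/2` neighbours, which exceeds the number of vertices of `U ∩ D_i` plus
all vertices already used or reserved as roots, so a fresh neighbour is always available.
-/

open Function

namespace SimpleGraph

variable {V W : Type*} {T : SimpleGraph W} {F : SimpleGraph V}

theorem IsAcyclic.eq_of_adj_of_walk (hT : T.IsAcyclic) {x y z : W} (hxy : T.Adj x y)
    (hxz : T.Adj x z) (p : T.Walk y z) (hx : x ∉ p.support) : y = z := by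
  classical
  have hpath : (Walk.cons hxy p.bypass).IsPath :=
    p.bypass_isPath.cons fun h => hx (p.support_bypass_subset_support h)
  have := congrArg Subtype.val
    ((hT.subsingleton_path _ _).elim ⟨_, hpath⟩ (Path.singleton hxz))
  simp only [Path.singleton_coe, Walk.cons.injEq] at this
  exact this.1

structure IsPartialRootedEmbedding (T : SimpleGraph W) (F : SimpleGraph V) (r : W) (v : V)
    (Bad : Set V) (s : Finset W) (f : W → V) : Prop where
  root_mem : r ∈ s
  exists_walk_within : ∀ a ∈ s, ∃ p : T.Walk r a, ∀ z ∈ p.support, z ∈ s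
  injOn : Set.InjOn f s
  map_root : f r = v
  map_mem_support : ∀ a ∈ s, f a ∈ F.support
  map_notMem : ∀ a ∈ s, a ≠ r → f a ∉ Bad
  map_adj : ∀ a ∈ s, ∀ b ∈ s, T.Adj a b → F.Adj (f a) (f b)

namespace IsPartialRootedEmbedding

variable {r : W} {v : V} {Bad : Set V} {s : Finset W} {f : W → V}

theorem singleton (hv : v ∈ F.support) :
    IsPartialRootedEmbedding T F r v Bad {r} (fun _ => v) where
  root_mem := Finset.mem_singleton_self r
  exists_walk_within a ha := by
    rw [Finset.mem_singleton.mp ha]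
    exact ⟨Walk.nil, by simp⟩
  injOn := by simp
  map_root := rfl
  map_mem_support _ _ := hv
  map_notMem a ha har := (har (Finset.mem_singleton.mp ha)).elim
  map_adj a ha b hb hab := by
    rw [Finset.mem_singleton.mp ha, Finset.mem_singleton.mp hb] at hab
    exact (T.loopless.irrefl r hab).elim

theorem eq_of_adj (h : IsPartialRootedEmbedding T F r v Bad s f) (hT : T.IsAcyclic)
    {x y b : W} (hx : x ∉ s) (hy : y ∈ s) (hb : b ∈ s) (hxy : T.Adj x y) (hxb : T.Adj x b) :
    b = y := by
  obtain ⟨py, hpy⟩ := h.exists_walk_within y hy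
  obtain ⟨pb, hpb⟩ := h.exists_walk_within b hb
  refine hT.eq_of_adj_of_walk hxb hxy (pb.reverse.append py) fun hmem => hx ?_
  rw [Walk.mem_support_append_iff, Walk.support_reverse, List.mem_reverse] at hmem
  exact hmem.elim (hpb x) (hpy x)

theorem exists_fresh_neighbor [Finite V] [Fintype W]
    (h : IsPartialRootedEmbedding T F r v Bad s f) (hs : s.card < Fintype.card W)
    (hdeg : ∀ x ∈ F.support,
      (Bad ∩ F.support).ncard + Fintype.card W ≤ (F.neighborSet x).ncard)
    {y : W} (hy : y ∈ s) : ∃ w, F.Adj (f y) w ∧ w ∉ Bad ∧ w ∉ f '' s := by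
  have hcard : ((Bad ∩ F.support) ∪ f '' s).ncard < (F.neighborSet (f y)).ncard :=
    calc ((Bad ∩ F.support) ∪ f '' s).ncard
        ≤ (Bad ∩ F.support).ncard + s.card := (Set.ncard_union_le _ _).trans (by
          gcongr; exact (Set.ncard_image_le s.finite_toSet).trans (Set.ncard_coe_finset s).le)
      _ < (Bad ∩ F.support).ncard + Fintype.card W := by gcongr
      _ ≤ _ := hdeg _ (h.map_mem_support y hy)
  obtain ⟨w, hw, hwfresh⟩ := Set.exists_mem_notMem_of_ncard_lt_ncard hcard
    ((Set.toFinite _).union (s.finite_toSet.image f))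
  have hwsupp : w ∈ F.support := F.mem_support.mpr ⟨f y, F.adj_symm hw⟩
  exact ⟨w, hw, fun hwBad => hwfresh (.inl ⟨hwBad, hwsupp⟩), fun hwf => hwfresh (.inr hwf)⟩

theorem insert_update [DecidableEq W] (h : IsPartialRootedEmbedding T F r v Bad s f)
    (hT : T.IsAcyclic) {x y : W} (hx : x ∉ s) (hy : y ∈ s) (hyx : T.Adj y x) {w : V}
    (hw : F.Adj (f y) w) (hwBad : w ∉ Bad) (hwf : w ∉ f '' s) :
    IsPartialRootedEmbedding T F r v Bad (insert x s) (update f x w) := by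
  have hupd : ∀ a ∈ s, update f x w a = f a := fun a ha =>
    update_of_ne (by rintro rfl; exact hx ha) _ _
  have hparent : ∀ b ∈ s, T.Adj x b → b = y := fun b hb hxb =>
    h.eq_of_adj hT hx hy hb hyx.symm hxb
  refine ⟨Finset.mem_insert_of_mem h.root_mem, ?_, ?_, ?_, ?_, ?_, ?_⟩
  · rw [Finset.forall_mem_insert]
    refine ⟨?_, fun a ha => ?_⟩
    · obtain ⟨py, hpy⟩ := h.exists_walk_within y hy
      refine ⟨py.concat hyx, fun z hz => ?_⟩
      rw [Walk.support_concat, List.mem_append, List.mem_singleton] at hz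
      exact hz.elim (fun hz => Finset.mem_insert_of_mem (hpy z hz))
        (fun hz => hz ▸ Finset.mem_insert_self x s)
    · obtain ⟨pa, hpa⟩ := h.exists_walk_within a ha
      exact ⟨pa, fun z hz => Finset.mem_insert_of_mem (hpa z hz)⟩
  · rw [Finset.coe_insert, Set.injOn_insert (by simpa using hx), update_self,
      Set.EqOn.image_eq (fun a ha => hupd a ha)]
    exact ⟨h.injOn.congr fun a ha => (hupd a ha).symm, hwf⟩
  · rw [hupd r h.root_mem, h.map_root]
  · rw [Finset.forall_mem_insert, update_self]
    exact ⟨F.mem_support.mpr ⟨f y, hw.symm⟩,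
      fun a ha => hupd a ha ▸ h.map_mem_support a ha⟩
  · rw [Finset.forall_mem_insert, update_self]
    exact ⟨fun _ => hwBad, fun a ha => hupd a ha ▸ h.map_notMem a ha⟩
  · simp only [Finset.forall_mem_insert, update_self]
    refine ⟨⟨fun hxx => (T.loopless.irrefl x hxx).elim, fun b hb hxb => ?_⟩,
      fun a ha => ⟨fun hax => ?_, fun b hb hab => ?_⟩⟩
    · rw [hupd b hb, hparent b hb hxb]; exact hw.symm
    · rw [hupd a ha, hparent a ha hax.symm]; exact hw
    · rw [hupd a ha, hupd b hb]; exact h.map_adj a ha b hb hab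

theorem exists_insert [Finite V] [Fintype W] [DecidableEq W]
    (h : IsPartialRootedEmbedding T F r v Bad s f) (hT : T.IsTree)
    (hs : s.card < Fintype.card W)
    (hdeg : ∀ x ∈ F.support,
      (Bad ∩ F.support).ncard + Fintype.card W ≤ (F.neighborSet x).ncard) :
    ∃ x ∉ s, ∃ g, IsPartialRootedEmbedding T F r v Bad (insert x s) g := by
  obtain ⟨a, -, ha⟩ := Finset.exists_mem_notMem_of_card_lt_card (t := Finset.univ) hs
  obtain ⟨p⟩ := hT.connected.preconnected r a
  obtain ⟨⟨⟨y, x⟩, hyx⟩, -, hy, hx⟩ := p.exists_boundary_dart (s : Set W) h.root_mem ha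
  simp only [Finset.mem_coe] at hy hx
  obtain ⟨w, hw, hwBad, hwf⟩ := h.exists_fresh_neighbor hs hdeg hy
  exact ⟨x, hx, _, h.insert_update hT.isAcyclic hx hy hyx hw hwBad hwf⟩

end IsPartialRootedEmbedding

theorem IsTree.exists_injective_hom_of_ncard_le [Finite V] [Fintype W] (hT : T.IsTree) (r : W)
    {v : V} (hv : v ∈ F.support) (Bad : Set V)
    (hdeg : ∀ x ∈ F.support,
      (Bad ∩ F.support).ncard + Fintype.card W ≤ (F.neighborSet x).ncard) :
    ∃ g : T →g F, Injective g ∧ g r = v ∧ ∀ a, a ≠ r → g a ∉ Bad := by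
  classical
  have hgrow : ∀ n < Fintype.card W,
      ∃ s f, s.card = n + 1 ∧ IsPartialRootedEmbedding T F r v Bad s f := by
    intro n hn
    induction n with
    | zero => exact ⟨{r}, _, rfl, .singleton hv⟩
    | succ n ih =>
      obtain ⟨s, f, hs, h⟩ := ih (by omega)
      obtain ⟨x, hx, g, hg⟩ := h.exists_insert hT (by omega) hdeg
      exact ⟨insert x s, g, by rw [Finset.card_insert_of_notMem hx, hs], hg⟩
  have hW : 0 < Fintype.card W := Fintype.card_pos_iff.mpr ⟨r⟩
  obtain ⟨s, f, hs, h⟩ := hgrow _ (Nat.sub_lt hW one_pos)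
  obtain rfl : s = Finset.univ := Finset.eq_univ_of_card s (by omega)
  exact ⟨⟨f, h.map_adj _ (Finset.mem_univ _) _ (Finset.mem_univ _)⟩,
    Set.injOn_univ.mp (by simpa using h.injOn), h.map_root,
    fun a => h.map_notMem a (Finset.mem_univ a)⟩

end SimpleGraph

section TreePacking

variable {ι V : Type*} {Vt : ι → Type*} (T : ∀ i, SimpleGraph (Vt i)) (r : ∀ i, Vt i)
  (G : SimpleGraph V) (Bad : ι → Set V) (f : ι → V)

structure IsPartialTreePacking (t : Finset ι) (ψ : ∀ i, Vt i → V) : Prop where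
  map_adj : ∀ i ∈ t, ∀ a b, (T i).Adj a b → G.Adj (ψ i a) (ψ i b)
  injective : ∀ i ∈ t, Injective (ψ i)
  map_notMem : ∀ i ∈ t, ∀ a, a ≠ r i → ψ i a ∉ Bad i
  map_root : ∀ i, ψ i (r i) = f i
  ne_of_ne : ∀ i j, i ≠ j → ∀ a b, ψ i a ≠ ψ j b

variable {T r G Bad f}

theorem IsPartialTreePacking.empty (hf : Injective f) :
    IsPartialTreePacking T r G Bad f ∅ fun i _ => f i where
  map_adj := by simp
  injective := by simp
  map_notMem := by simp
  map_root _ := rfl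
  ne_of_ne _ _ hij _ _ := hf.ne hij

theorem IsPartialTreePacking.insert_update [DecidableEq ι] {t : Finset ι} {ψ : ∀ i, Vt i → V}
    (h : IsPartialTreePacking T r G Bad f t ψ) {i : ι} (hi : i ∉ t) (g : Vt i → V)
    (hg_adj : ∀ a b, (T i).Adj a b → G.Adj (g a) (g b)) (hg : Injective g) (hgr : g (r i) = f i)
    (hgBad : ∀ a, a ≠ r i → g a ∉ Bad i)
    (hg_ne : ∀ a, a ≠ r i → ∀ j ≠ i, ∀ b, g a ≠ ψ j b) :
    IsPartialTreePacking T r G Bad f (insert i t) (update ψ i g) := by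
  have hne : ∀ j ∈ t, j ≠ i := fun j hj hji => hi (hji ▸ hj)
  have hg_ne' : ∀ j ≠ i, ∀ a b, g a ≠ ψ j b := by
    intro j hj a b
    by_cases ha : a = r i
    · rw [ha, hgr, ← h.map_root i]; exact h.ne_of_ne i j hj.symm _ _
    · exact hg_ne a ha j hj b
  refine ⟨?_, ?_, ?_, fun j => ?_, fun j j' hjj' a b => ?_⟩
  · simp only [Finset.forall_mem_insert, update_self]
    exact ⟨hg_adj, fun j hj => by rw [update_of_ne (hne j hj)]; exact h.map_adj j hj⟩
  · simp only [Finset.forall_mem_insert, update_self]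
    exact ⟨hg, fun j hj => by rw [update_of_ne (hne j hj)]; exact h.injective j hj⟩
  · simp only [Finset.forall_mem_insert, update_self]
    exact ⟨hgBad, fun j hj => by rw [update_of_ne (hne j hj)]; exact h.map_notMem j hj⟩
  · rcases eq_or_ne j i with rfl | hj
    · rw [update_self, hgr]
    · rw [update_of_ne hj]; exact h.map_root j
  · rcases eq_or_ne j i with rfl | hj
    · rw [update_self, update_of_ne hjj'.symm]; exact hg_ne' j' hjj'.symm a b
    rcases eq_or_ne j' i with rfl | hj'
    · rw [update_self, update_of_ne hj]; exact (hg_ne' j hj b a).symm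
    · rw [update_of_ne hj, update_of_ne hj']; exact h.ne_of_ne j j' hjj' a b

/-- Besides `Bad i`, tree `i` must avoid the images of all other `ψ j`: the trees already
embedded and the roots reserved for the others, at most `∑ j ≠ i, |T j|` vertices. -/
theorem IsPartialTreePacking.exists_insert [Fintype ι] [DecidableEq ι] [Finite V]
    [∀ i, Fintype (Vt i)] {t : Finset ι} {ψ : ∀ i, Vt i → V}
    (h : IsPartialTreePacking T r G Bad f t ψ) {i : ι} (hi : i ∉ t) (hT : (T i).IsTree)
    {F : SimpleGraph V} (hFG : F ≤ G) (hfi : f i ∈ F.support)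
    (hdeg : ∀ x ∈ F.support,
      (Bad i ∩ F.support).ncard + ∑ j, Fintype.card (Vt j) ≤ (F.neighborSet x).ncard) :
    ∃ ψ', IsPartialTreePacking T r G Bad f (insert i t) ψ' := by
  classical
  set R : Finset V := (Finset.univ.erase i).biUnion fun j => Finset.univ.image (ψ j)
  have hR : R.card + Fintype.card (Vt i) ≤ ∑ j, Fintype.card (Vt j) := by
    rw [← Finset.sum_erase_add _ _ (Finset.mem_univ i)]
    gcongr
    exact Finset.card_biUnion_le.trans (Finset.sum_le_sum fun j _ => Finset.card_image_le)
  have hdegR : ∀ x ∈ F.support,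
      ((Bad i ∪ R) ∩ F.support).ncard + Fintype.card (Vt i) ≤ (F.neighborSet x).ncard := by
    intro x hx
    have hRF : ((R : Set V) ∩ F.support).ncard ≤ R.card :=
      (Set.ncard_le_ncard Set.inter_subset_left).trans (Set.ncard_coe_finset R).le
    have := (Set.ncard_union_le (Bad i ∩ F.support) (R ∩ F.support)).trans
      (Nat.add_le_add_left hRF _)
    rw [← Set.union_inter_distrib_right] at this
    linarith [hdeg x hx]
  obtain ⟨g, hg, hgr, hgBad⟩ :=
    hT.exists_injective_hom_of_ncard_le (r i) hfi (Bad i ∪ R) hdegR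
  refine ⟨_, h.insert_update hi g (fun a b hab => hFG (g.map_adj hab)) hg hgr
    (fun a ha haB => hgBad a ha (.inl haB)) fun a ha j hj b hab => hgBad a ha (.inr ?_)⟩
  exact Finset.mem_biUnion.mpr ⟨j, Finset.mem_erase.mpr ⟨hj, Finset.mem_univ j⟩,
    Finset.mem_image.mpr ⟨b, Finset.mem_univ b, hab.symm⟩⟩

theorem exists_disjoint_tree_embeddings [Fintype ι] [Finite V] [∀ i, Fintype (Vt i)]
    (hT : ∀ i, (T i).IsTree) (F : ι → SimpleGraph V) (hFG : ∀ i, F i ≤ G)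
    (hf : Injective f) (hfF : ∀ i, f i ∈ (F i).support)
    (hdeg : ∀ i, ∀ x ∈ (F i).support,
      (Bad i ∩ (F i).support).ncard + ∑ j, Fintype.card (Vt j) ≤
        ((F i).neighborSet x).ncard) :
    ∃ φ : ∀ i, T i →g G, (∀ i, Injective (φ i)) ∧
      (∀ i j, i ≠ j → ∀ a b, φ i a ≠ φ j b) ∧
      (∀ i, φ i (r i) = f i) ∧ ∀ i a, a ≠ r i → φ i a ∉ Bad i := by
  classical
  have hpack : ∀ t : Finset ι, ∃ ψ, IsPartialTreePacking T r G Bad f t ψ := by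
    intro t
    induction t using Finset.induction_on with
    | empty => exact ⟨_, .empty hf⟩
    | insert i t hi ih =>
      obtain ⟨ψ, hψ⟩ := ih
      exact hψ.exists_insert hi (hT i) (hFG i) (hfF i) (hdeg i)
  obtain ⟨ψ, hψ⟩ := hpack Finset.univ
  exact ⟨fun i => ⟨ψ i, hψ.map_adj i (Finset.mem_univ i) _ _⟩,
    fun i => hψ.injective i (Finset.mem_univ i), hψ.ne_of_ne, hψ.map_root,
    fun i => hψ.map_notMem i (Finset.mem_univ i)⟩

end TreePacking

theorem Set.exists_injective_fin_of_le_ncard {V : Type*} [Finite V] {s : Set V} {ℓ : ℕ}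
    (h : ℓ ≤ s.ncard) : ∃ f : Fin ℓ → V, Injective f ∧ ∀ i, f i ∈ s := by
  have : Fintype s := Fintype.ofFinite s
  obtain ⟨e⟩ := Function.Embedding.nonempty_of_card_le (α := Fin ℓ) (β := s)
    (by rwa [Fintype.card_fin, ← Nat.card_eq_fintype_card, Nat.card_coe_set_eq])
  exact ⟨fun i => e i, Subtype.val_injective.comp e.injective, fun i => (e i).2⟩

namespace DenseSpot

variable {V : Type} [Fintype V] {G : SimpleGraph V} {m γ : ℝ} (D : DenseSpot V G m γ)

theorem support_subset_verts : D.F.support ⊆ D.verts := by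
  rintro x ⟨y, hxy⟩
  rcases D.bipartite hxy with ⟨hx, -⟩ | ⟨hx, -⟩
  exacts [Or.inl hx, Or.inr hx]

theorem lt_ncard_neighborSet {x : V} (hx : x ∈ D.F.support) :
    m < (D.F.neighborSet x).ncard :=
  D.mindeg x (D.support_subset_verts hx)

theorem mem_support_of_mem_verts (hm : 0 ≤ m) {x : V} (hx : x ∈ D.verts) :
    x ∈ D.F.support := by
  have hdeg : m < (D.F.neighborSet x).ncard := D.mindeg x hx
  obtain ⟨y, hy⟩ := Set.nonempty_of_ncard_ne_zero (s := D.F.neighborSet x)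
    (by exact_mod_cast (hm.trans_lt hdeg).ne')
  exact ⟨y, hy⟩

theorem ncard_inter_support_add_le_ncard_neighborSet {U : Set V} {n : ℕ}
    (hU : ((U ∩ D.verts).ncard : ℝ) + n ≤ m) {x : V} (hx : x ∈ D.F.support) :
    (U ∩ D.F.support).ncard + n ≤ (D.F.neighborSet x).ncard := by
  have hsub : (U ∩ D.F.support).ncard ≤ (U ∩ D.verts).ncard :=
    Set.ncard_le_ncard (Set.inter_subset_inter_right _ D.support_subset_verts)
  have hlt : (((U ∩ D.F.support).ncard + n : ℕ) : ℝ) < (D.F.neighborSet x).ncard := by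
    push_cast
    linarith [D.lt_ncard_neighborSet hx, (Nat.cast_le (α := ℝ)).mpr hsub]
  exact_mod_cast hlt.le

end DenseSpot

theorem IsAvoiding.exists_injective_fin {V : Type} [Fintype V] {G : SimpleGraph V} {m : ℝ}
    {Λ k ℓ : ℕ} {ε γ : ℝ} {𝒟 : Set (DenseSpot V G m γ)} {E : Set V}
    (h : IsAvoiding Λ ε γ k 𝒟 E) {U : Set V} (hU : (U.ncard : ℝ) ≤ Λ * k) {Ustar : Set V}
    (hUs : Ustar ⊆ E) (hcard : ε * k + ℓ ≤ Ustar.ncard) :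
    ∃ f : Fin ℓ → V, Injective f ∧ ∀ i, f i ∈ Ustar ∧
      ∃ D ∈ 𝒟, f i ∈ D.verts ∧ ((U ∩ D.verts).ncard : ℝ) ≤ γ ^ 2 * k := by
  set Bad := {v ∈ E | ¬ ∃ D ∈ 𝒟, v ∈ D.verts ∧
    ((U ∩ D.verts).ncard : ℝ) ≤ γ ^ 2 * k}
  have hgood : ℓ ≤ (Ustar \ Bad).ncard := by
    have hsplit : (Ustar.ncard : ℝ) ≤ (Ustar \ Bad).ncard + Bad.ncard := by
      exact_mod_cast Set.ncard_le_ncard_sdiff_add_ncard Ustar Bad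
    have : (ℓ : ℝ) ≤ (Ustar \ Bad).ncard := by linarith [h.2 U hU]
    exact_mod_cast this
  obtain ⟨f, hf, hfs⟩ := Set.exists_injective_fin_of_le_ncard hgood
  refine ⟨f, hf, fun i => ⟨(hfs i).1, ?_⟩⟩
  by_contra hno
  exact (hfs i).2 ⟨hUs (hfs i).1, hno⟩

theorem stmt7_general (V : Type) [Fintype V] (H : SimpleGraph V)
    (Λ k : ℕ)
    (ε γ : ℝ) (hγ : γ ∈ Set.Ioo (0 : ℝ) (1 / 2))
    (𝒟 : Set (DenseSpot V H (γ * k) γ)) (E : Set V)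
    (havoid : IsAvoiding Λ ε γ k 𝒟 E)
    (ℓ : ℕ) (Vt : Fin ℓ → Type) [∀ i, Fintype (Vt i)]
    (T : ∀ i, SimpleGraph (Vt i)) (hT : ∀ i, (T i).IsTree) (r : ∀ i, Vt i)
    (horder : ((∑ i, Fintype.card (Vt i) : ℕ) : ℝ) ≤ γ * k / 2)
    (U : Set V) (hU : (U.ncard : ℝ) ≤ (Λ : ℝ) * k)
    (Ustar : Set V) (hUs : Ustar ⊆ E) (hUscard : ε * k + ℓ ≤ (Ustar.ncard : ℝ)) :
    ∃ φ : ∀ i, T i →g H,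
      (∀ i, Function.Injective (φ i)) ∧
      (∀ i j, i ≠ j → ∀ (a : Vt i) (b : Vt j), φ i a ≠ φ j b) ∧
      (∀ i, φ i (r i) ∈ Ustar) ∧
      (∀ i (a : Vt i), a ≠ r i → φ i a ∉ U) := by
  obtain ⟨hγ0, hγ1⟩ := hγ
  have hγk : 0 ≤ γ * k := by positivity
  obtain ⟨f, hf, hfgood⟩ := havoid.exists_injective_fin hU hUs hUscard
  choose hfU D _ hfD hUD using hfgood
  have hbudget :
      ∀ i, ((U ∩ (D i).verts).ncard : ℝ) + ∑ j, Fintype.card (Vt j) ≤ γ * k := by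
    have hγ2 : γ ^ 2 * k ≤ γ * k / 2 := by nlinarith
    exact fun i => by linarith [hUD i]
  obtain ⟨φ, hinj, hdisj, hroot, hU'⟩ := exists_disjoint_tree_embeddings hT (fun i => (D i).F)
    (fun i => (D i).le) hf (fun i => (D i).mem_support_of_mem_verts hγk (hfD i))
    (Bad := fun _ => U)
    (fun i _ hx => (D i).ncard_inter_support_add_le_ncard_neighborSet (hbudget i) hx)
  exact ⟨φ, hinj, hdisj, fun i => hroot i ▸ hfU i, hU'⟩

/-- Embedding a family of rooted trees of total order at most `γk/2` using a
`(Λ,ε,γ,k)`-avoiding set: the roots go to `U* ⊆ 𝔼` and the remaining vertices avoid `U`. -/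
theorem stmt7 (V : Type) [Fintype V] (H : SimpleGraph V)
    (Λ k : ℕ) (hΛ : 0 < Λ) (hk : 0 < k)
    (ε γ : ℝ) (hε : ε ∈ Set.Ioo (0 : ℝ) (1 / 2)) (hγ : γ ∈ Set.Ioo (0 : ℝ) (1 / 2))
    (hεγ : ε < γ ^ 2)
    (𝒟 : Set (DenseSpot V H (γ * k) γ)) (E : Set V)
    (havoid : IsAvoiding Λ ε γ k 𝒟 E)
    (ℓ : ℕ) (Vt : Fin ℓ → Type) [∀ i, Fintype (Vt i)]
    (T : ∀ i, SimpleGraph (Vt i)) (hT : ∀ i, (T i).IsTree) (r : ∀ i, Vt i)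
    (horder : ((∑ i, Fintype.card (Vt i) : ℕ) : ℝ) ≤ γ * k / 2)
    (U : Set V) (hU : (U.ncard : ℝ) ≤ (Λ : ℝ) * k)
    (Ustar : Set V) (hUs : Ustar ⊆ E) (hUscard : ε * k + ℓ ≤ (Ustar.ncard : ℝ)) :
    ∃ φ : ∀ i, T i →g H,
      (∀ i, Function.Injective (φ i)) ∧
      (∀ i j, i ≠ j → ∀ (a : Vt i) (b : Vt j), φ i a ≠ φ j b) ∧
      (∀ i, φ i (r i) ∈ Ustar) ∧
      (∀ i (a : Vt i), a ≠ r i → φ i a ∉ U) :=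
  stmt7_general V H Λ k ε γ hγ 𝒟 E havoid ℓ Vt T hT r horder U hU Ustar hUs hUscard
end

section
/- Let d > 10ε > 0. Suppose (A,B) forms an (ε,d)-super-regular pair with |A|, |B| ≥ ℓ. Let U_A ⊆ A and U_B ⊆ B be such that |U_A| ≤ |A|/2 and |U_B| ≤ d|B|/4. Let (T,r) be a rooted tree of order at most dℓ/4, and let v ∈ A∖U_A be arbitrary. Then there exists an (r ↪ v, V_even(T,r) ↪ A∖U_A, V_odd(T,r) ↪ B∖U_B)-embedding of T, i.e. an embedding mapping r to v. -/
/-!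
Call a vertex of `B` bad if it has fewer than `(d - ε)|A ∖ U_A|` neighbours in `A ∖ U_A`. Since
`|A ∖ U_A| ≥ |A|/2 ≥ ε|A|`, ε-regularity leaves at most `ε|B|` bad vertices. Now embed `T`
greedily, level by level from the root: even levels go to `A ∖ U_A`, odd levels to the good
vertices of `B ∖ U_B`. In a tree a new vertex only has to be adjacent to the image of its parent,
and that image has at least `d|B| - |U_B| - ε|B|`, respectively `(d - ε)|A|/2`, neighbours on the
other side; both exceed `dℓ/4 ≥ |T|`, so an unused one is always available.
-/

/-- A pair `(A,B)` of disjoint vertex sets is `ε`-regular in `G` if all subpairs `(A',B')`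
with `|A'| ≥ ε|A|` and `|B'| ≥ ε|B|` have density within `ε` of the density of `(A,B)`. -/
def IsRegularPair {V : Type} [Fintype V] (G : SimpleGraph V) [DecidableRel G.Adj]
    (ε : ℝ) (A B : Finset V) : Prop :=
  ∀ A' ⊆ A, ∀ B' ⊆ B, ε * A.card ≤ A'.card → ε * B.card ≤ B'.card →
    |(G.edgeDensity A' B' : ℝ) - (G.edgeDensity A B : ℝ)| < ε

/-- A pair `(A,B)` is `(ε,d)`-super-regular: it is `ε`-regular, every vertex of `A` has at
least `d|B|` neighbours in `B`, and every vertex of `B` has at least `d|A|` neighbours in `A`. -/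
def IsSuperRegularPair {V : Type} [Fintype V] (G : SimpleGraph V) [DecidableRel G.Adj]
    (ε d : ℝ) (A B : Finset V) : Prop :=
  IsRegularPair G ε A B ∧
    (∀ a ∈ A, d * B.card ≤ ((G.neighborSet a ∩ (↑B : Set V)).ncard : ℝ)) ∧
    (∀ b ∈ B, d * A.card ≤ ((G.neighborSet b ∩ (↑A : Set V)).ncard : ℝ))

open Finset Function

lemma Finset.card_filter_le_card_filter_sdiff_add_card {α : Type*} [DecidableEq α]
    (p : α → Prop) [DecidablePred p] (s u : Finset α) :
    #{y ∈ s | p y} ≤ #{y ∈ s \ u | p y} + #u :=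
  (card_le_card fun y hy => by by_cases y ∈ u <;> simp_all).trans (card_union_le _ _)

namespace SimpleGraph

variable {V W : Type*} {G : SimpleGraph V} {T : SimpleGraph W}

lemma Reachable.exists_adj_dist_add_one {u v : V} (h : G.Reachable u v) (hne : u ≠ v) :
    ∃ w, G.Adj w v ∧ G.dist u w + 1 = G.dist u v := by
  obtain ⟨q, hq⟩ := h.exists_walk_length_eq_dist
  have hnil : ¬q.Nil := fun hn => hne hn.eq
  refine ⟨q.penultimate, q.adj_penultimate hnil, ?_⟩
  have hle : G.dist u q.penultimate ≤ q.length - 1 := q.length_dropLast ▸ dist_le q.dropLast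
  have hpos : 0 < q.length := q.not_nil_iff_lt_length.mp hnil
  rcases (q.adj_penultimate hnil).diff_dist_adj (u := u) with h | h | h <;> omega

lemma IsTree.eq_of_adj_of_dist_add_one (hG : G.IsTree) (r : V) {w a b : V} (ha : G.Adj a w)
    (hb : G.Adj b w) (hda : G.dist r a + 1 = G.dist r w) (hdb : G.dist r b + 1 = G.dist r w) :
    a = b := by
  classical
  obtain ⟨q, hq, -⟩ := hG.connected.exists_path_of_dist r w
  suffices ∀ a, G.Adj a w → G.dist r a + 1 = G.dist r w → a = q.penultimate from
    (this a ha hda).trans (this b hb hdb).symm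
  intro a ha hda
  refine hG.isAcyclic.eq_penultimate_of_adj_end hq ha.symm (by_contra fun ha' => ?_)
  obtain ⟨p, hp, hpl⟩ := hG.connected.exists_path_of_dist r a
  have hw := hG.isAcyclic.mem_support_of_ne_mem_support_of_adj_of_isPath hp hq ha ha'
  have := dist_le (p.takeUntil w hw)
  have := p.length_takeUntil_le_length hw
  omega

def IsEmbeddingOn (T : SimpleGraph W) (G : SimpleGraph V) (φ : W → V) (S : Set W) : Prop :=
  Set.InjOn φ S ∧ ∀ a ∈ S, ∀ b ∈ S, T.Adj a b → G.Adj (φ a) (φ b)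

lemma IsEmbeddingOn.update_insert [DecidableEq W] {φ : W → V} {S : Set W}
    (hφ : IsEmbeddingOn T G φ S) {w : W} {y : V} (hw : w ∉ S) (hy : y ∉ φ '' S)
    (hadj : ∀ a ∈ S, T.Adj a w → G.Adj (φ a) y) :
    IsEmbeddingOn T G (update φ w y) (insert w S) := by
  have heqOn : Set.EqOn (update φ w y) φ S := fun a ha =>
    update_of_ne (ne_of_mem_of_not_mem ha hw) _ _
  refine ⟨Set.injOn_insert hw |>.2 ⟨hφ.1.congr heqOn.symm, ?_⟩, ?_⟩
  · rwa [update_self, heqOn.image_eq]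
  · rintro a (rfl | ha) b (rfl | hb) hab
    · exact absurd rfl hab.ne
    · rw [update_self, heqOn hb]; exact (hadj b hb hab.symm).symm
    · rw [update_self, heqOn ha]; exact hadj a ha hab
    · rw [heqOn ha, heqOn hb]; exact hφ.2 a ha b hb hab

section Density

variable [DecidableRel G.Adj]

lemma card_interedges_eq_sum (s t : Finset V) :
    #(G.interedges s t) = ∑ a ∈ s, #{b ∈ t | G.Adj a b} := by
  simp only [interedges_def, card_filter, sum_product]

lemma le_edgeDensity_of_le_card_filter_adj {s t : Finset V} {c : ℝ} (hs : s.Nonempty)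
    (ht : t.Nonempty) (h : ∀ a ∈ s, c * #t ≤ #{b ∈ t | G.Adj a b}) : c ≤ G.edgeDensity s t := by
  have hsum := sum_le_sum h
  rw [sum_const, nsmul_eq_mul] at hsum
  rw [edgeDensity_def, card_interedges_eq_sum, Rat.cast_div, le_div_iff₀ (by positivity)]
  push_cast
  linarith

lemma edgeDensity_le_of_card_filter_adj_le {s t : Finset V} {c : ℝ} (hs : s.Nonempty)
    (ht : t.Nonempty) (h : ∀ a ∈ s, #{b ∈ t | G.Adj a b} ≤ c * #t) : G.edgeDensity s t ≤ c := by
  have hsum := sum_le_sum h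
  rw [sum_const, nsmul_eq_mul] at hsum
  rw [edgeDensity_def, card_interedges_eq_sum, Rat.cast_div, div_le_iff₀ (by positivity)]
  push_cast
  linarith

end Density

section TreeEmbedding

variable [DecidableEq V] [DecidableRel G.Adj] [Fintype W]

lemma IsTree.exists_isEmbeddingOn_of_le_card_filter_adj (hT : T.IsTree) (r : W)
    (P : ℕ → Finset V) (hP : ∀ n, ∀ x ∈ P n, Fintype.card W ≤ #{y ∈ P (n + 1) | G.Adj x y})
    {v : V} (hv : v ∈ P 0) (S : Finset W)
    (hS : ∀ x ∈ S, ∀ y, T.dist r y < T.dist r x → y ∈ S) :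
    ∃ φ : W → V, IsEmbeddingOn T G φ S ∧ φ r = v ∧ ∀ a ∈ S, φ a ∈ P (T.dist r a) := by
  classical
  induction S using Finset.strongInduction with | H S ih =>
  rcases S.eq_empty_or_nonempty with rfl | hne
  · exact ⟨fun _ => v, by simp [IsEmbeddingOn], rfl, by simp⟩
  obtain ⟨w, hwS, hwmax⟩ := S.exists_max_image (T.dist r) hne
  obtain ⟨φ, hφ, hφr, hφP⟩ := ih (S.erase w) (erase_ssubset hwS) fun x hx y hy =>
    mem_erase.2 ⟨by rintro rfl; exact (hwmax x (mem_of_mem_erase hx)).not_gt hy,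
      hS x (mem_of_mem_erase hx) y hy⟩
  -- the vertex `w` is a leaf of `S` whose only neighbour in `S` is its parent
  obtain ⟨y, hyφ, hyP, hyadj, hyr⟩ : ∃ y, y ∉ φ '' ↑(S.erase w) ∧ y ∈ P (T.dist r w) ∧
      (∀ a ∈ S.erase w, T.Adj a w → G.Adj (φ a) y) ∧ (w = r → y = v) := by
    by_cases hwr : w = r
    · subst hwr
      have hS' : S.erase w = ∅ := by
        refine eq_empty_of_forall_notMem fun x hx => (mem_erase.1 hx).1 ?_
        have := hwmax x (mem_of_mem_erase hx)
        rw [dist_self, Nat.le_zero, (hT.connected w x).dist_eq_zero_iff] at this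
        exact this.symm
      exact ⟨v, by simp [hS'], by simpa using hv, by simp [hS'], fun _ => rfl⟩
    obtain ⟨p, hpw, hp⟩ := (hT.connected r w).exists_adj_dist_add_one (Ne.symm hwr)
    have hpS : p ∈ S.erase w := mem_erase.2 ⟨hpw.ne, hS w hwS p (by omega)⟩
    have hcard : #((S.erase w).image φ) < #{y ∈ P (T.dist r w) | G.Adj (φ p) y} := calc
      #((S.erase w).image φ) ≤ #(S.erase w) := card_image_le
      _ < #S := card_erase_lt_of_mem hwS
      _ ≤ Fintype.card W := card_le_univ S
      _ ≤ _ := by rw [← hp]; exact hP _ _ (hφP p hpS)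
    obtain ⟨y, hy, hyφ⟩ := exists_mem_notMem_of_card_lt_card hcard
    rw [mem_filter] at hy
    refine ⟨y, by rwa [← coe_image, mem_coe], hy.1, fun a ha haw => ?_, fun h => absurd h hwr⟩
    have hap : a = p := by
      refine hT.eq_of_adj_of_dist_add_one r haw hpw ?_ hp
      have := hwmax a (mem_of_mem_erase ha)
      rcases hT.dist_eq_dist_add_one_of_adj r haw with h | h <;> omega
    exact hap ▸ hy.2
  refine ⟨update φ w y, ?_, ?_, ?_⟩
  · rw [← insert_erase hwS, coe_insert]
    exact hφ.update_insert (by simp) hyφ hyadj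
  · by_cases hwr : w = r
    · subst hwr; simpa using hyr rfl
    · rwa [update_of_ne (Ne.symm hwr)]
  · intro a ha
    by_cases haw : a = w
    · subst haw; simpa using hyP
    · rw [update_of_ne haw]; exact hφP a (mem_erase.2 ⟨haw, ha⟩)

theorem IsTree.exists_injective_hom_of_le_card_filter_adj (hT : T.IsTree) (r : W)
    {X Y : Finset V} (hX : ∀ x ∈ X, Fintype.card W ≤ #{y ∈ Y | G.Adj x y})
    (hY : ∀ y ∈ Y, Fintype.card W ≤ #{x ∈ X | G.Adj y x}) {v : V} (hv : v ∈ X) :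
    ∃ φ : T →g G, Injective φ ∧ φ r = v ∧ (∀ a, Even (T.dist r a) → φ a ∈ X) ∧
      ∀ a, Odd (T.dist r a) → φ a ∈ Y := by
  let P : ℕ → Finset V := fun n => if Even n then X else Y
  have hP : ∀ n, ∀ x ∈ P n, Fintype.card W ≤ #{y ∈ P (n + 1) | G.Adj x y} := by
    intro n x hx
    by_cases hn : Even n
    · simpa [P, hn, Nat.even_add_one] using hX x (by simpa [P, hn] using hx)
    · simpa [P, hn, Nat.even_add_one] using hY x (by simpa [P, hn] using hx)
  obtain ⟨φ, hφ, hφr, hφP⟩ := hT.exists_isEmbeddingOn_of_le_card_filter_adj r P hP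
    (by simpa [P] using hv) univ fun _ _ y _ => mem_univ y
  refine ⟨⟨φ, fun h => hφ.2 _ (mem_univ _) _ (mem_univ _) h⟩, by simpa using hφ.1, hφr,
    fun a ha => ?_, fun a ha => ?_⟩
  · simpa [P, ha] using hφP a (mem_univ a)
  · simpa [P, Nat.not_even_iff_odd.2 ha] using hφP a (mem_univ a)

end TreeEmbedding

end SimpleGraph

section RegularPair

variable {V : Type} [Fintype V] {G : SimpleGraph V} [DecidableRel G.Adj] {ε d : ℝ}
  {A B : Finset V}

lemma IsSuperRegularPair.le_card_filter_adj (h : IsSuperRegularPair G ε d A B) {a : V}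
    (ha : a ∈ A) : d * #B ≤ #{b ∈ B | G.Adj a b} := by
  have hset : G.neighborSet a ∩ ↑B = ↑({b ∈ B | G.Adj a b} : Finset V) := by
    ext; simp [and_comm]
  have hdeg := h.2.1 a ha
  rwa [hset, Set.ncard_coe_finset] at hdeg

lemma IsSuperRegularPair.le_card_filter_adj_sdiff [DecidableEq V]
    (h : IsSuperRegularPair G ε d A B) {a : V} (ha : a ∈ A) (U : Finset V) :
    d * #B - #U ≤ #{b ∈ B \ U | G.Adj a b} := by
  have hfree : #{b ∈ B | G.Adj a b} ≤ #{b ∈ B \ U | G.Adj a b} + #U :=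
    card_filter_le_card_filter_sdiff_add_card _ _ _
  have hdeg := h.le_card_filter_adj ha
  have : (#{b ∈ B | G.Adj a b} : ℝ) ≤ #{b ∈ B \ U | G.Adj a b} + #U := by exact_mod_cast hfree
  linarith

lemma IsSuperRegularPair.le_edgeDensity (h : IsSuperRegularPair G ε d A B) (hA : A.Nonempty)
    (hB : B.Nonempty) : d ≤ G.edgeDensity A B :=
  SimpleGraph.le_edgeDensity_of_le_card_filter_adj hA hB fun _ ha => h.le_card_filter_adj ha

lemma IsSuperRegularPair.le_one (h : IsSuperRegularPair G ε d A B) (hA : A.Nonempty)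
    (hB : B.Nonempty) : d ≤ 1 := by
  obtain ⟨a, ha⟩ := hA
  have hle : (#{b ∈ B | G.Adj a b} : ℝ) ≤ #B := by exact_mod_cast card_filter_le _ _
  have hB' : (0 : ℝ) < #B := by exact_mod_cast hB.card_pos
  nlinarith [h.le_card_filter_adj ha]

lemma IsRegularPair.card_lowDegree_le (h : IsRegularPair G ε A B) (hε : 0 ≤ ε) {A' : Finset V}
    (hA' : A' ⊆ A) (hA'card : ε * #A ≤ #A') {δ : ℝ} (hδ : δ ≤ G.edgeDensity A B) :
    (#{b ∈ B | #{a ∈ A' | G.Adj b a} < (δ - ε) * #A'} : ℝ) ≤ ε * #B := by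
  set Bad := {b ∈ B | (#{a ∈ A' | G.Adj b a} : ℝ) < (δ - ε) * #A'}
  by_contra! hlt
  have hBad : Bad.Nonempty :=
    card_pos.1 (by exact_mod_cast (by positivity : 0 ≤ ε * #B).trans_lt hlt)
  have hA'ne : A'.Nonempty := by
    obtain ⟨b, hb⟩ := hBad
    refine nonempty_iff_ne_empty.2 fun hA'e => ?_
    simp [Bad, hA'e] at hb
  have hup : G.edgeDensity Bad A' ≤ δ - ε :=
    SimpleGraph.edgeDensity_le_of_card_filter_adj_le hBad hA'ne fun b hb => (mem_filter.1 hb).2.le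
  have hreg := h A' hA' Bad (filter_subset _ _) hA'card hlt.le
  rw [SimpleGraph.edgeDensity_comm] at hreg
  linarith [(abs_lt.1 hreg).1]

end RegularPair

theorem stmt11_general (V : Type) [Fintype V] [DecidableEq V] (G : SimpleGraph V) [DecidableRel G.Adj]
    (ε d : ℝ) (hε : 0 < ε) (hd : 10 * ε < d)
    (A B : Finset V) (ℓ : ℕ)
    (hA : ℓ ≤ A.card) (hB : ℓ ≤ B.card)
    (hsr : IsSuperRegularPair G ε d A B)
    (UA UB : Finset V) (hUA : UA ⊆ A)
    (hUAcard : (UA.card : ℝ) ≤ (A.card : ℝ) / 2)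
    (hUBcard : (UB.card : ℝ) ≤ d * B.card / 4)
    (W : Type) [Fintype W] (T : SimpleGraph W) (hT : T.IsTree) (r : W)
    (horder : (Fintype.card W : ℝ) ≤ d * ℓ / 4)
    (v : V) (hv : v ∈ A \ UA) :
    ∃ φ : T →g G, Function.Injective φ ∧ φ r = v ∧
      (∀ a : W, Even (T.dist r a) → φ a ∈ A \ UA) ∧
      (∀ a : W, Odd (T.dist r a) → φ a ∈ B \ UB) := by
  set A' := A \ UA
  set Bad : Finset V := {b ∈ B | (#{a ∈ A' | G.Adj b a} : ℝ) < (d - ε) * #A'}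
  have hW : (1 : ℝ) ≤ Fintype.card W := by exact_mod_cast Fintype.card_pos_iff.2 ⟨r⟩
  have hℓ : (0 : ℝ) < ℓ := by by_contra! h; nlinarith
  have hℓA : (ℓ : ℝ) ≤ #A := by exact_mod_cast hA
  have hℓB : (ℓ : ℝ) ≤ #B := by exact_mod_cast hB
  have hAne : A.Nonempty := by rw [← card_pos]; exact_mod_cast hℓ.trans_le hℓA
  have hBne : B.Nonempty := by rw [← card_pos]; exact_mod_cast hℓ.trans_le hℓB
  have hA' : (#A : ℝ) / 2 ≤ #A' := by
    rw [card_sdiff_of_subset hUA, Nat.cast_sub (card_le_card hUA)]; linarith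
  have hBad : (#Bad : ℝ) ≤ ε * #B := by
    refine hsr.1.card_lowDegree_le hε.le sdiff_subset ?_ (hsr.le_edgeDensity hAne hBne)
    nlinarith [hsr.le_one hAne hBne]
  have hX : ∀ x ∈ A', Fintype.card W ≤ #{y ∈ B \ (UB ∪ Bad) | G.Adj x y} := by
    intro x hx
    have hdeg := hsr.le_card_filter_adj_sdiff (sdiff_subset hx) (UB ∪ Bad)
    have hU : (#(UB ∪ Bad) : ℝ) ≤ #UB + #Bad := by exact_mod_cast card_union_le _ _
    suffices (Fintype.card W : ℝ) ≤ #{y ∈ B \ (UB ∪ Bad) | G.Adj x y} by exact_mod_cast this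
    nlinarith [mul_le_mul_of_nonneg_right hd.le (Nat.cast_nonneg #B)]
  have hY : ∀ y ∈ B \ (UB ∪ Bad), Fintype.card W ≤ #{x ∈ A' | G.Adj y x} := by
    intro y hy
    obtain ⟨hyB, hyU⟩ := mem_sdiff.1 hy
    have hdeg : (d - ε) * #A' ≤ #{x ∈ A' | G.Adj y x} :=
      not_lt.1 fun hlt => hyU (mem_union_right _ (mem_filter.2 ⟨hyB, hlt⟩))
    suffices (Fintype.card W : ℝ) ≤ #{x ∈ A' | G.Adj y x} by exact_mod_cast this
    nlinarith [mul_le_mul_of_nonneg_left hA' (by linarith : 0 ≤ d - ε),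
      mul_le_mul_of_nonneg_right hd.le (Nat.cast_nonneg ℓ)]
  obtain ⟨φ, hinj, hφr, hφX, hφY⟩ := hT.exists_injective_hom_of_le_card_filter_adj r hX hY hv
  exact ⟨φ, hinj, hφr, hφX, fun a ha =>
    sdiff_subset_sdiff subset_rfl subset_union_left (hφY a ha)⟩

/-- Embedding a rooted tree of order at most `dℓ/4` into an
`(ε,d)`-super-regular pair `(A,B)` with the root mapped to a prescribed vertex
`v ∈ A ∖ U_A`, even levels in `A ∖ U_A` and odd levels in `B ∖ U_B`. -/
theorem stmt11 (V : Type) [Fintype V] [DecidableEq V] (G : SimpleGraph V) [DecidableRel G.Adj]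
    (ε d : ℝ) (hε : 0 < ε) (hd : 10 * ε < d)
    (A B : Finset V) (hAB : Disjoint A B) (ℓ : ℕ)
    (hA : ℓ ≤ A.card) (hB : ℓ ≤ B.card)
    (hsr : IsSuperRegularPair G ε d A B)
    (UA UB : Finset V) (hUA : UA ⊆ A) (hUB : UB ⊆ B)
    (hUAcard : (UA.card : ℝ) ≤ (A.card : ℝ) / 2)
    (hUBcard : (UB.card : ℝ) ≤ d * B.card / 4)
    (W : Type) [Fintype W] (T : SimpleGraph W) (hT : T.IsTree) (r : W)
    (horder : (Fintype.card W : ℝ) ≤ d * ℓ / 4)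
    (v : V) (hv : v ∈ A \ UA) :
    ∃ φ : T →g G, Function.Injective φ ∧ φ r = v ∧
      (∀ a : W, Even (T.dist r a) → φ a ∈ A \ UA) ∧
      (∀ a : W, Odd (T.dist r a) → φ a ∈ B \ UB) :=
  stmt11_general V G ε d hε hd A B ℓ hA hB hsr UA UB hUA hUAcard hUBcard W T hT r horder v hv
end
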